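/- Let f be an integer additive set-indexer of a simple graph G. Then f is a strong IASI of G if and only if for every edge uv of G the difference sets of the set-labels of its end vertices are disjoint, i.e., D_{f(u)} ∩ D_{f(v)} = ∅, where D_A denotes the set of positive differences between elements of A. -/

import Mathlib

open Pointwise

/-- The difference set of a finite set `A` of non-negative integers:
the set of positive differences `a - a'` with `a, a' ∈ A`, `a > a'`. -/
def diffSet (A : Finset ℕ) : Finset ℕ :=
  ((A ×ˢ A).filter fun p => p.2 < p.1).image fun p => p.1 - p.2

/-- `f` is an integer additive set-indexer (IASI) of the simple graph `G`:
`f` is injective, assigns nonempty finite sets of non-negative integers to vertices,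
and the induced edge function `f⁺(uv) = f(u) + f(v)` is injective on edges. -/
def IsIASI {V : Type*} (G : SimpleGraph V) (f : V → Finset ℕ) : Prop :=
  Function.Injective f ∧ (∀ v, (f v).Nonempty) ∧
    ∀ ⦃u v u' v' : V⦄, G.Adj u v → G.Adj u' v' →
      f u + f v = f u' + f v' → s(u, v) = s(u', v')

/-- A strong IASI: `|f⁺(uv)| = |f(u)| * |f(v)|` for all edges `uv`. -/
def IsStrongIASI {V : Type*} (G : SimpleGraph V) (f : V → Finset ℕ) : Prop :=
  IsIASI G f ∧ ∀ ⦃u v : V⦄, G.Adj u v → (f u + f v).card = (f u).card * (f v).card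

/-- A strongly `k`-uniform IASI: `|f⁺(uv)| = |f(u)| * |f(v)| = k` for all edges `uv`. -/
def IsStronglyUniformIASI {V : Type*} (G : SimpleGraph V) (f : V → Finset ℕ) (k : ℕ) : Prop :=
  IsStrongIASI G f ∧ ∀ ⦃u v : V⦄, G.Adj u v → (f u + f v).card = k

/-- A weakly `k`-uniform IASI: `|f⁺(uv)| = max(|f(u)|, |f(v)|) = k` for all edges `uv`. -/
def IsWeaklyUniformIASI {V : Type*} (G : SimpleGraph V) (f : V → Finset ℕ) (k : ℕ) : Prop :=
  IsIASI G f ∧ ∀ ⦃u v : V⦄, G.Adj u v →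
    (f u + f v).card = max (f u).card (f v).card ∧ (f u + f v).card = k

/-! The sum map `(a, b) ↦ a + b` is injective on `A ×ˢ B` exactly when `|A + B| = |A| * |B|`,
and a collision `a + b = a' + b'` with `a' < a` is the same thing as a common difference
`a - a' = b' - b` of `A` and `B`. -/

lemma mem_diffSet {A : Finset ℕ} {d : ℕ} :
    d ∈ diffSet A ↔ ∃ a ∈ A, ∃ a' ∈ A, a' < a ∧ a - a' = d := by
  simp only [diffSet, Finset.mem_image, Finset.mem_filter, Finset.mem_product, Prod.exists]
  constructor
  · rintro ⟨a, a', ⟨⟨ha, ha'⟩, hlt⟩, rfl⟩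
    exact ⟨a, ha, a', ha', hlt, rfl⟩
  · rintro ⟨a, ha, a', ha', hlt, rfl⟩
    exact ⟨a, a', ⟨⟨ha, ha'⟩, hlt⟩, rfl⟩

lemma sub_mem_diffSet_of_add_eq_add {B : Finset ℕ} {a a' b b' : ℕ}
    (hb : b ∈ B) (hb' : b' ∈ B) (hlt : a' < a) (h : a + b = a' + b') : a - a' ∈ diffSet B :=
  mem_diffSet.2 ⟨b', hb', b, hb, by omega, by omega⟩

theorem card_add_eq_mul_iff_disjoint_diffSet {A B : Finset ℕ} :
    (A + B).card = A.card * B.card ↔ Disjoint (diffSet A) (diffSet B) := by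
  rw [Finset.card_add_iff, Finset.disjoint_left]
  constructor
  · intro hinj d hdA hdB
    obtain ⟨a, ha, a', ha', hlt, rfl⟩ := mem_diffSet.1 hdA
    obtain ⟨b, hb, b', hb', -, hd⟩ := mem_diffSet.1 hdB
    have hpairs : (a, b') = (a', b) :=
      hinj (Set.mk_mem_prod ha hb') (Set.mk_mem_prod ha' hb) (show a + b' = a' + b by omega)
    exact hlt.ne' (congrArg Prod.fst hpairs)
  · intro hdisj
    have no_descent : ∀ ⦃a a' b b' : ℕ⦄, a ∈ A → a' ∈ A → b ∈ B → b' ∈ B →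
        a + b = a' + b' → ¬a' < a := fun a a' b b' ha ha' hb hb' h hlt ↦
      hdisj (mem_diffSet.2 ⟨a, ha, a', ha', hlt, rfl⟩)
        (sub_mem_diffSet_of_add_eq_add hb hb' hlt h)
    rintro ⟨a, b⟩ ⟨ha, hb⟩ ⟨a', b'⟩ ⟨ha', hb'⟩ (h : a + b = a' + b')
    have ha_eq : a = a' :=
      le_antisymm (not_lt.1 (no_descent ha ha' hb hb' h))
        (not_lt.1 (no_descent ha' ha hb' hb h.symm))
    subst ha_eq
    simp only [Prod.mk.injEq, true_and]
    omega

/-- An IASI `f` of a simple graph `G` is a strong IASI iff for every edge `uv`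
the difference sets of the set-labels of its end vertices are disjoint. -/
theorem strongIASI_iff_disjoint_diffSets {V : Type*} (G : SimpleGraph V) (f : V → Finset ℕ)
    (hf : IsIASI G f) :
    IsStrongIASI G f ↔ ∀ ⦃u v : V⦄, G.Adj u v → Disjoint (diffSet (f u)) (diffSet (f v)) :=
  ⟨fun h _ _ huv ↦ card_add_eq_mul_iff_disjoint_diffSet.1 (h.2 huv),
    fun h ↦ ⟨hf, fun _ _ huv ↦ card_add_eq_mul_iff_disjoint_diffSet.2 (h huv)⟩⟩
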